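/- arXiv:2301.11713 — 7 statements merged into one kernel-verified Lean document; each statement's English description precedes it below -/
import Mathlib

section
/- For the cycle C_n on n vertices with n odd, DL(C_n) = (n−1)/2. -/
/-- `G` admits a `k`-dispersed labelling. -/
def HasDispersedLabelling {V : Type*} [Fintype V] (G : SimpleGraph V) (k : ℕ) : Prop :=
  ∃ φ : Fin (Fintype.card V) ≃ V,
    ∀ i j : Fin (Fintype.card V), (j : ℕ) = (i : ℕ) + 1 → k ≤ G.dist (φ i) (φ j)

/-- `DL G`: the maximum `k` such that `G` admits a `k`-dispersed labelling. -/
noncomputable def DL {V : Type*} [Fintype V] (G : SimpleGraph V) : ℕ :=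
  sSup {k | HasDispersedLabelling G k}

/-! In `C_n` the distance from `u` to `v` is `min ((v - u) mod n, (u - v) mod n) ≤ n / 2`, which
already bounds the first step of any labelling, so `DL (C_n) ≤ m` for `n = 2m + 1`. Conversely `m`
is invertible modulo `2m + 1`, so the vertices `0, m, 2m, …` (mod `n`) form a labelling whose
consecutive vertices all lie at distance `m`. -/

theorem Fin.val_sub_eq_ite {n : ℕ} (a b : Fin n) :
    (a - b).val = if b ≤ a then a.val - b.val else n + a.val - b.val := by
  split_ifs with h
  · exact Fin.sub_val_of_le h
  · exact Fin.coe_sub_iff_lt.mpr (not_le.mp h)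

namespace SimpleGraph

variable {n : ℕ}

theorem cycleGraph_min_val_sub_le_length {u v : Fin n} (p : (cycleGraph n).Walk u v) :
    min (v - u).val (u - v).val ≤ p.length := by
  induction p with
  | nil => simp [Fin.val_sub_eq_ite]
  | @cons a b c hadj p ih =>
    rw [cycleGraph_adj'] at hadj
    rw [Walk.length_cons]
    simp only [Fin.val_sub_eq_ite, Fin.le_def] at hadj ih ⊢
    have := c.isLt
    split_ifs at hadj ih ⊢ <;> omega

theorem cycleGraph_exists_walk_length_eq_val_sub (u v : Fin n) :
    ∃ p : (cycleGraph n).Walk u v, p.length = (v - u).val := by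
  obtain ⟨k, rfl⟩ : ∃ k, n = k + 1 := ⟨n - 1, by have := u.isLt; omega⟩
  induction hd : (v - u).val generalizing v with
  | zero =>
    obtain rfl : v = u := by simpa [sub_eq_zero, Fin.ext_iff] using hd
    exact ⟨.nil, rfl⟩
  | succ d ih =>
    have hv : v ≠ u := by rintro rfl; simp at hd
    have hprev : (v - 1 - u).val = d := by
      rw [sub_right_comm, Fin.coe_sub_one, if_neg (by simpa [sub_eq_zero] using hv), hd]
      rfl
    obtain ⟨p, hp⟩ := ih (v - 1) hprev
    have hadj : (cycleGraph (k + 1)).Adj (v - 1) v := by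
      rw [cycleGraph_adj']
      right
      have := (v - u).isLt
      rw [sub_sub_cancel, Fin.val_one', Nat.mod_eq_of_lt (by omega)]
    exact ⟨p.concat hadj, by simp [hp]⟩

theorem cycleGraph_dist (u v : Fin n) :
    (cycleGraph n).dist u v = min (v - u).val (u - v).val := by
  refine le_antisymm (le_min ?_ ?_) ?_
  · obtain ⟨p, hp⟩ := cycleGraph_exists_walk_length_eq_val_sub u v
    exact hp ▸ dist_le p
  · obtain ⟨p, hp⟩ := cycleGraph_exists_walk_length_eq_val_sub v u
    exact dist_comm (G := cycleGraph n) ▸ hp ▸ dist_le p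
  · obtain ⟨p, hp⟩ := (cycleGraph_preconnected u v).exists_walk_length_eq_dist
    exact hp ▸ cycleGraph_min_val_sub_le_length p

theorem cycleGraph_dist_le_half (u v : Fin n) : (cycleGraph n).dist u v ≤ n / 2 := by
  rw [cycleGraph_dist]
  simp only [Fin.val_sub_eq_ite, Fin.le_def]
  have := u.isLt
  have := v.isLt
  split_ifs <;> omega

open Fin.NatCast in
theorem cycleGraph_dist_add_half (m : ℕ) (u : Fin (2 * m + 1)) :
    (cycleGraph (2 * m + 1)).dist u (u + (m : Fin (2 * m + 1))) = m := by
  rcases Nat.eq_zero_or_pos m with rfl | hm0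
  · simp
  have hm : ((m : Fin (2 * m + 1)) : ℕ) = m := Fin.val_cast_of_lt (by omega)
  rw [cycleGraph_dist, add_sub_cancel_left, sub_add_cancel_left, hm, Fin.val_neg', hm,
    Nat.mod_eq_of_lt (show 2 * m + 1 - m < 2 * m + 1 by omega)]
  omega

end SimpleGraph

open SimpleGraph

theorem HasDispersedLabelling.le_of_forall_dist_le {V : Type*} [Fintype V] {G : SimpleGraph V}
    {k m : ℕ} (h : HasDispersedLabelling G k) (hV : 1 < Fintype.card V)
    (hm : ∀ u v, G.dist u v ≤ m) : k ≤ m := by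
  obtain ⟨φ, hφ⟩ := h
  exact (hφ ⟨0, by omega⟩ ⟨1, hV⟩ rfl).trans (hm _ _)

open Fin.NatCast Fin.CommRing in
theorem hasDispersedLabelling_cycleGraph_odd (m : ℕ) :
    HasDispersedLabelling (cycleGraph (2 * m + 1)) m := by
  -- `2 * m + 1 = 0` makes `-2` an inverse of `m`, so `i ↦ i * m` permutes the vertices.
  have hinv : (m : Fin (2 * m + 1)) * -2 = 1 := by
    have := Fin.natCast_self (2 * m + 1)
    push_cast at this
    linear_combination -this
  refine ⟨(finCongr (Fintype.card_fin _)).trans (Units.mulRight (.mkOfMulEqOne _ _ hinv)), ?_⟩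
  intro i j hij
  have hsucc : finCongr (Fintype.card_fin _) j = finCongr (Fintype.card_fin _) i + 1 := by
    have hj : (j : ℕ) < 2 * m + 1 := by simpa using j.isLt
    have hlast : finCongr (Fintype.card_fin _) i < Fin.last (2 * m) := by
      rw [Fin.lt_def, finCongr_apply, Fin.val_cast, Fin.val_last]
      omega
    ext
    rw [Fin.val_add_one_of_lt hlast]
    simpa using hij
  simp only [Equiv.trans_apply, Units.mulRight_apply, Units.val_mkOfMulEqOne, hsucc, add_mul,
    one_mul]
  exact (cycleGraph_dist_add_half m _).ge

theorem DL_cycleGraph_odd (n : ℕ) (hn : 3 ≤ n) (hodd : Odd n) :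
    DL (SimpleGraph.cycleGraph n) = (n - 1) / 2 := by
  obtain ⟨m, rfl⟩ := hodd
  rw [show (2 * m + 1 - 1) / 2 = m by omega]
  refine IsGreatest.csSup_eq ⟨hasDispersedLabelling_cycleGraph_odd m, fun k hk => ?_⟩
  refine hk.le_of_forall_dist_le (by rw [Fintype.card_fin]; omega) fun u v => ?_
  exact (cycleGraph_dist_le_half u v).trans (by omega)
end

section
/- For any finite connected graph G, DL(G) ≤ r(G), where r(G) is the radius of G. -/
/-- The eccentricity of a vertex: the maximum distance to another vertex. -/
noncomputable def eccent {V : Type*} [Fintype V] (G : SimpleGraph V) (v : V) : ℕ :=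
  Finset.univ.sup (fun u => G.dist v u)

/-- The radius of a graph: the minimum eccentricity of a vertex. -/
noncomputable def graphRadius {V : Type*} [Fintype V] (G : SimpleGraph V) : ℕ :=
  sInf (Set.range (eccent G))

/-! In a `k`-dispersed labelling of at least two vertices, the centre `c` has a consecutive
label, at distance at least `k` from `c`; that distance is at most `ε(c) = r(G)`. -/

section

variable {V : Type*} [Fintype V] (G : SimpleGraph V)

lemma dist_le_eccent (v u : V) : G.dist v u ≤ eccent G v :=
  Finset.le_sup (f := fun u => G.dist v u) (Finset.mem_univ u)

lemma exists_eccent_eq_graphRadius [Nonempty V] : ∃ c, eccent G c = graphRadius G :=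
  Nat.sInf_mem (Set.range_nonempty _)

end

lemma Fin.exists_adjacent_index {n : ℕ} (hn : 2 ≤ n) (i : Fin n) :
    ∃ j : Fin n, (j : ℕ) = i + 1 ∨ (i : ℕ) = j + 1 := by
  rcases lt_or_ge ((i : ℕ) + 1) n with h | h
  · exact ⟨⟨i + 1, h⟩, Or.inl rfl⟩
  · exact ⟨⟨i - 1, by omega⟩, Or.inr (by dsimp only; omega)⟩

lemma HasDispersedLabelling.le_eccent {V : Type*} [Fintype V] {G : SimpleGraph V} {k : ℕ}
    (hk : HasDispersedLabelling G k) (hcard : 2 ≤ Fintype.card V) (v : V) :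
    k ≤ eccent G v := by
  obtain ⟨φ, hφ⟩ := hk
  obtain ⟨j, hj | hj⟩ := Fin.exists_adjacent_index hcard (φ.symm v)
  · calc k ≤ G.dist (φ (φ.symm v)) (φ j) := hφ _ _ hj
      _ ≤ eccent G v := by rw [φ.apply_symm_apply]; exact dist_le_eccent G v _
  · calc k ≤ G.dist (φ j) (φ (φ.symm v)) := hφ _ _ hj
      _ ≤ eccent G v := by rw [φ.apply_symm_apply, G.dist_comm]; exact dist_le_eccent G v _

theorem DL_le_radius_general {V : Type*} [Fintype V] [Nonempty V] (G : SimpleGraph V)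
    (hcard : 2 ≤ Fintype.card V) :
    DL G ≤ graphRadius G := by
  obtain ⟨c, hc⟩ := exists_eccent_eq_graphRadius G
  refine csSup_le' fun k hk => ?_
  exact hc ▸ HasDispersedLabelling.le_eccent hk hcard c

theorem DL_le_radius {V : Type*} [Fintype V] [Nonempty V] (G : SimpleGraph V)
    (hG : G.Connected) (hcard : 2 ≤ Fintype.card V) :
    DL G ≤ graphRadius G :=
  DL_le_radius_general G hcard
end

section
/- If m and n are both even, with m,n ≥ 2, then DL(L_{m,n}) ≤ (m+n)/2 − 1, where L_{m,n} is the m×n grid graph. -/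
/-- The `m × n` grid graph, as the box product of two path graphs. -/
def gridGraph (m n : ℕ) : SimpleGraph (Fin m × Fin n) :=
  SimpleGraph.boxProd (SimpleGraph.pathGraph m) (SimpleGraph.pathGraph n)

namespace SimpleGraph

lemma dist_boxProd_le {α β : Type*} {G : SimpleGraph α} {H : SimpleGraph β} (x y : α × β) :
    (G □ H).dist x y ≤ G.dist x.1 y.1 + H.dist x.2 y.2 := by
  by_cases hxy : (G □ H).Reachable x y
  · obtain ⟨h₁, h₂⟩ := reachable_boxProd.1 hxy
    have h : ((G □ H).dist x y : ℕ∞) = G.dist x.1 y.1 + H.dist x.2 y.2 := by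
      rw [hxy.coe_dist_eq_edist, h₁.coe_dist_eq_edist, h₂.coe_dist_eq_edist, edist_boxProd]
    exact_mod_cast h.le
  · simp [dist_eq_zero_of_not_reachable hxy]

lemma pathGraph_dist_le_of_val_eq_add {n : ℕ} (k : ℕ) :
    ∀ a b : Fin n, (b : ℕ) = a + k → (pathGraph n).dist a b ≤ k := by
  induction k with
  | zero =>
    intro a b hab
    simp [Fin.ext hab.symm]
  | succ k ih =>
    intro a b hab
    let b' : Fin n := ⟨b - 1, by omega⟩
    have hadj : (pathGraph n).Adj b' b := by
      rw [pathGraph_adj]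
      left
      simp only [b']
      omega
    calc (pathGraph n).dist a b
        ≤ (pathGraph n).dist a b' + (pathGraph n).dist b' b :=
          (pathGraph_preconnected n b' b).dist_triangle_right a
      _ ≤ k + 1 := by
          rw [dist_eq_one_iff_adj.2 hadj]
          exact Nat.add_le_add_right (ih a b' (by simp only [b']; omega)) 1

lemma pathGraph_dist_le {n : ℕ} (a b : Fin n) : (pathGraph n).dist a b ≤ Nat.dist a b := by
  rcases le_total (a : ℕ) b with h | h
  · exact (pathGraph_dist_le_of_val_eq_add (b - a) a b (by omega)).trans
      (by simp only [Nat.dist]; omega)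
  · rw [dist_comm]
    exact (pathGraph_dist_le_of_val_eq_add (a - b) b a (by omega)).trans
      (by simp only [Nat.dist]; omega)

end SimpleGraph

open SimpleGraph

lemma gridGraph_dist_le {m n : ℕ} (u v : Fin m × Fin n) :
    (gridGraph m n).dist u v ≤ Nat.dist u.1 v.1 + Nat.dist u.2 v.2 :=
  (dist_boxProd_le u v).trans (Nat.add_le_add (pathGraph_dist_le _ _) (pathGraph_dist_le _ _))

lemma gridGraph_subsingleton_setOf_le_dist {p q : ℕ} (c : Fin (2 * p) × Fin (2 * q))
    (hc₁ : p ≤ c.1 + 1) (hc₁' : c.1 ≤ p) (hc₂ : q ≤ c.2 + 1) (hc₂' : c.2 ≤ q) :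
    {v | p + q ≤ (gridGraph (2 * p) (2 * q)).dist c v}.Subsingleton := by
  intro v hv w hw
  have hv' := hv.trans (gridGraph_dist_le c v)
  have hw' := hw.trans (gridGraph_dist_le c w)
  simp only [Nat.dist] at hv' hw'
  have := v.1.isLt; have := v.2.isLt; have := w.1.isLt; have := w.2.isLt
  exact Prod.ext (Fin.ext (by omega)) (Fin.ext (by omega))

section DispersedLabelling

variable {V : Type*} [Fintype V] {G : SimpleGraph V}

lemma hasDispersedLabelling_zero (G : SimpleGraph V) : HasDispersedLabelling G 0 :=
  ⟨(Fintype.equivFin V).symm, fun _ _ _ => Nat.zero_le _⟩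

lemma HasDispersedLabelling.mono {j k : ℕ} (h : HasDispersedLabelling G k) (hjk : j ≤ k) :
    HasDispersedLabelling G j :=
  let ⟨φ, hφ⟩ := h
  ⟨φ, fun i i' hii' => hjk.trans (hφ i i' hii')⟩

lemma DL_le_of_not_hasDispersedLabelling {b : ℕ} (h : ¬HasDispersedLabelling G (b + 1)) :
    DL G ≤ b :=
  csSup_le ⟨0, hasDispersedLabelling_zero G⟩ fun _ hk => le_of_not_gt fun hbk => h (hk.mono hbk)

/-- An interior label would give `c` two distinct label-neighbours at distance `≥ k` from it. -/
lemma label_eq_zero_or_last_of_subsingleton {k : ℕ} {φ : Fin (Fintype.card V) ≃ V}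
    (hφ : ∀ i j : Fin (Fintype.card V), (j : ℕ) = (i : ℕ) + 1 → k ≤ G.dist (φ i) (φ j))
    {c : V} (hc : {v | k ≤ G.dist c v}.Subsingleton) :
    (φ.symm c : ℕ) = 0 ∨ (φ.symm c : ℕ) + 1 = Fintype.card V := by
  by_contra! hmid
  set i := φ.symm c
  have hiN := i.isLt
  let iPrev : Fin (Fintype.card V) := ⟨i - 1, by omega⟩
  let iNext : Fin (Fintype.card V) := ⟨i + 1, by omega⟩
  have hφi : φ i = c := φ.apply_symm_apply c
  have hprev : k ≤ G.dist c (φ iPrev) := by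
    rw [dist_comm, ← hφi]
    exact hφ iPrev i (by simp only [iPrev]; omega)
  have hnext : k ≤ G.dist c (φ iNext) := hφi ▸ hφ i iNext rfl
  have := congrArg Fin.val (φ.injective (hc hprev hnext))
  simp only [iPrev, iNext] at this
  omega

lemma not_hasDispersedLabelling_of_three_subsingleton {k : ℕ} {a b c : V}
    (hab : a ≠ b) (hac : a ≠ c) (hbc : b ≠ c)
    (ha : {v | k ≤ G.dist a v}.Subsingleton) (hb : {v | k ≤ G.dist b v}.Subsingleton)
    (hc : {v | k ≤ G.dist c v}.Subsingleton) :
    ¬HasDispersedLabelling G k := by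
  rintro ⟨φ, hφ⟩
  have hab' : (φ.symm a : ℕ) ≠ φ.symm b := fun h => hab (φ.symm.injective (Fin.ext h))
  have hac' : (φ.symm a : ℕ) ≠ φ.symm c := fun h => hac (φ.symm.injective (Fin.ext h))
  have hbc' : (φ.symm b : ℕ) ≠ φ.symm c := fun h => hbc (φ.symm.injective (Fin.ext h))
  have := label_eq_zero_or_last_of_subsingleton hφ ha
  have := label_eq_zero_or_last_of_subsingleton hφ hb
  have := label_eq_zero_or_last_of_subsingleton hφ hc
  omega

end DispersedLabelling

theorem DL_grid_even_upper_bound (m n : ℕ) (hm : 2 ≤ m) (hn : 2 ≤ n)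
    (hme : Even m) (hne : Even n) :
    DL (gridGraph m n) ≤ (m + n) / 2 - 1 := by
  obtain ⟨p, rfl⟩ := hme.two_dvd
  obtain ⟨q, rfl⟩ := hne.two_dvd
  apply DL_le_of_not_hasDispersedLabelling
  rw [show (2 * p + 2 * q) / 2 - 1 + 1 = p + q by omega]
  let c₁ : Fin (2 * p) × Fin (2 * q) := (⟨p - 1, by omega⟩, ⟨q - 1, by omega⟩)
  let c₂ : Fin (2 * p) × Fin (2 * q) := (⟨p - 1, by omega⟩, ⟨q, by omega⟩)
  let c₃ : Fin (2 * p) × Fin (2 * q) := (⟨p, by omega⟩, ⟨q - 1, by omega⟩)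
  refine not_hasDispersedLabelling_of_three_subsingleton (a := c₁) (b := c₂) (c := c₃)
    ?_ ?_ ?_ ?_ ?_ ?_
  iterate 3 (simp only [c₁, c₂, c₃, ne_eq, Prod.ext_iff, Fin.ext_iff]; omega)
  all_goals apply gridGraph_subsingleton_setOf_le_dist <;> simp only [c₁, c₂, c₃] <;> omega
end

section
/- For all n ≥ 2, there exists an ordering v_1, ..., v_{2^n} of all binary n-tuples such that the Hamming distance between v_j and v_{j+1} is at least n−1 for every 1 ≤ j ≤ 2^n − 1, with v_1 = (0,...,0), v_{2^{n-1}} = (1,...,1,0), v_{2^{n-1}+1} = (0,...,0,1), and v_{2^n} = (1,...,1). -/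
/-!
Induction on `n`, starting from the vacuous case `n = 0`. Given an ordering `w` of `(ℤ/2)ⁿ`,
run through it twice and append one bit: the parity of the position within the pass, shifted by
one from the middle of the pass on, and complemented on the second pass. Consecutive tuples then
differ in the new bit and in at least `n - 1` old coordinates, except across the middle of a pass
and across the seam between the passes, where the bit does not change but `w` jumps from
`(1,…,1,0)` to `(0,…,0,1)`, respectively from `(1,…,1)` to `(0,…,0)`, so all `n` old coordinates
change. The four anchor tuples of `w` yield those of the new ordering.
-/

theorem hammingDist_snoc {α : Type*} [DecidableEq α] {n : ℕ} (a c : Fin n → α) (b d : α) :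
    hammingDist (Fin.snoc a b : Fin (n + 1) → α) (Fin.snoc c d) =
      hammingDist a c + if b = d then 0 else 1 := by
  simp only [hammingDist, Finset.card_filter, Fin.sum_univ_castSucc, Fin.snoc_castSucc,
    Fin.snoc_last, ite_not]

theorem hammingDist_eq_card_of_forall_ne {ι α : Type*} [Fintype ι] [DecidableEq α]
    {x y : ι → α} (h : ∀ i, x i ≠ y i) : hammingDist x y = Fintype.card ι := by
  rw [hammingDist, Finset.filter_true_of_mem fun i _ => h i, Finset.card_univ]

theorem Fin.snoc_const {α : Type*} {n : ℕ} (a b : α) :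
    (Fin.snoc (fun _ => a) b : Fin (n + 1) → α) =
      fun i : Fin (n + 1) => if (i : ℕ) = n then b else a := by
  funext i
  cases i using Fin.lastCases with
  | last => simp
  | cast i => simp [i.isLt.ne]

-- Orderings are sequences `ℕ → (ℤ/2)ⁿ`, of which only the first `2 ^ n` terms count; this keeps
-- the index arithmetic of the doubling step out of `Fin`.
structure IsDispersedOrdering (n : ℕ) (w : ℕ → Fin n → ZMod 2) : Prop where
  injOn : Set.InjOn w (Set.Iio (2 ^ n))
  le_hammingDist_succ : ∀ j, j + 1 < 2 ^ n → n - 1 ≤ hammingDist (w j) (w (j + 1))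
  apply_zero : w 0 = fun _ => 0
  apply_half_sub_one : w (2 ^ (n - 1) - 1) = fun i : Fin n => if (i : ℕ) = n - 1 then 0 else 1
  apply_half : w (2 ^ (n - 1)) = fun i : Fin n => if (i : ℕ) = n - 1 then 1 else 0
  apply_last : w (2 ^ n - 1) = fun _ => 1

theorem isDispersedOrdering_zero (w : ℕ → Fin 0 → ZMod 2) : IsDispersedOrdering 0 w where
  injOn j₁ h₁ j₂ h₂ _ := by simp_all
  le_hammingDist_succ j h := by simp at h
  apply_zero := Subsingleton.elim _ _
  apply_half_sub_one := Subsingleton.elim _ _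
  apply_half := Subsingleton.elim _ _
  apply_last := Subsingleton.elim _ _

def extendBit (n q : ℕ) : ZMod 2 := q + if q < 2 ^ (n - 1) then 0 else 1

theorem extendBit_zero (n : ℕ) : extendBit n 0 = 0 := by
  simp [extendBit]

theorem extendBit_succ {n q : ℕ} (hq : q + 1 ≠ 2 ^ (n - 1)) :
    extendBit n (q + 1) = extendBit n q + 1 := by
  unfold extendBit
  by_cases h : q + 1 < 2 ^ (n - 1)
  · rw [if_pos h, if_pos (by omega)]; push_cast; ring
  · rw [if_neg h, if_neg (by omega)]; push_cast; ring

theorem extendBit_two_pow_sub_one (n : ℕ) : extendBit n (2 ^ n - 1) = 0 := by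
  cases n with
  | zero => simp [extendBit]
  | succ m =>
    have hlt : ¬ 2 ^ (m + 1) - 1 < 2 ^ (m + 1 - 1) := by
      have := Nat.one_le_two_pow (n := m)
      simp only [Nat.add_sub_cancel, pow_succ]
      omega
    rw [extendBit, if_neg hlt, ← Nat.cast_add_one, Nat.sub_add_cancel Nat.one_le_two_pow]
    simp [pow_succ, show (2 : ZMod 2) = 0 from rfl]

def extendOrdering (n : ℕ) (w : ℕ → Fin n → ZMod 2) (j : ℕ) : Fin (n + 1) → ZMod 2 :=
  Fin.snoc (w (j % 2 ^ n)) (extendBit n (j % 2 ^ n) + (j / 2 ^ n : ℕ))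

theorem extendOrdering_add_two_pow_mul {n q : ℕ} (w : ℕ → Fin n → ZMod 2) (hq : q < 2 ^ n)
    (t : ℕ) : extendOrdering n w (q + 2 ^ n * t) = Fin.snoc (w q) (extendBit n q + t) := by
  simp [extendOrdering, Nat.add_mul_div_left _ _ (Nat.two_pow_pos n), Nat.div_eq_of_lt hq,
    Nat.mod_eq_of_lt hq]

theorem extendOrdering_of_lt {n j : ℕ} (w : ℕ → Fin n → ZMod 2) (hj : j < 2 ^ n) :
    extendOrdering n w j = Fin.snoc (w j) (extendBit n j) := by
  simpa using extendOrdering_add_two_pow_mul w hj 0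

theorem extendOrdering_two_pow_add {n q : ℕ} (w : ℕ → Fin n → ZMod 2) (hq : q < 2 ^ n) :
    extendOrdering n w (2 ^ n + q) = Fin.snoc (w q) (extendBit n q + 1) := by
  simpa [add_comm] using extendOrdering_add_two_pow_mul w hq 1

def dispersedOrdering : (n : ℕ) → ℕ → Fin n → ZMod 2
  | 0 => fun _ => 0
  | n + 1 => extendOrdering n (dispersedOrdering n)

namespace IsDispersedOrdering

variable {n : ℕ} {w : ℕ → Fin n → ZMod 2}

theorem bijective (hw : IsDispersedOrdering n w) : Function.Bijective fun j : Fin (2 ^ n) => w j :=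
  (Fintype.bijective_iff_injective_and_card _).2
    ⟨fun j₁ j₂ h => Fin.ext (hw.injOn j₁.isLt j₂.isLt h), by simp [ZMod.card]⟩

theorem le_hammingDist_snoc_succ (hw : IsDispersedOrdering n w) {q : ℕ} (hq : q + 1 < 2 ^ n)
    (t : ZMod 2) :
    n ≤ hammingDist (Fin.snoc (w q) (extendBit n q + t) : Fin (n + 1) → ZMod 2)
      (Fin.snoc (w (q + 1)) (extendBit n (q + 1) + t)) := by
  rw [hammingDist_snoc]
  by_cases hmid : q + 1 = 2 ^ (n - 1)
  · obtain rfl : q = 2 ^ (n - 1) - 1 := by omega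
    rw [hmid, hw.apply_half_sub_one, hw.apply_half, hammingDist_eq_card_of_forall_ne,
      Fintype.card_fin]
    · omega
    · intro i; split_ifs <;> decide
  · rw [extendBit_succ hmid, if_neg (by rw [add_right_comm]; simp)]
    have := hw.le_hammingDist_succ q hq
    omega

theorem injOn_extendOrdering (hw : IsDispersedOrdering n w) :
    Set.InjOn (extendOrdering n w) (Set.Iio (2 ^ (n + 1))) := by
  intro j₁ h₁ j₂ h₂ h
  obtain ⟨hinit, hlast⟩ := Fin.snoc_inj.1 h
  have hN := Nat.two_pow_pos n
  have hmod : j₁ % 2 ^ n = j₂ % 2 ^ n := hw.injOn (Nat.mod_lt _ hN) (Nat.mod_lt _ hN) hinit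
  rw [hmod, add_right_inj, ZMod.natCast_eq_natCast_iff'] at hlast
  have hdiv_lt : ∀ j < 2 ^ (n + 1), j / 2 ^ n < 2 := fun j hj =>
    Nat.div_lt_of_lt_mul (by rwa [← pow_succ])
  rw [Nat.mod_eq_of_lt (hdiv_lt _ h₁), Nat.mod_eq_of_lt (hdiv_lt _ h₂)] at hlast
  rw [← Nat.mod_add_div j₁ (2 ^ n), ← Nat.mod_add_div j₂ (2 ^ n), hmod, hlast]

theorem le_hammingDist_extendOrdering_succ (hw : IsDispersedOrdering n w) {j : ℕ}
    (hj : j + 1 < 2 ^ (n + 1)) :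
    n ≤ hammingDist (extendOrdering n w j) (extendOrdering n w (j + 1)) := by
  have hN := Nat.two_pow_pos n
  obtain ⟨q, t, hq, rfl⟩ : ∃ q t, q < 2 ^ n ∧ j = q + 2 ^ n * t :=
    ⟨_, _, Nat.mod_lt j hN, (Nat.mod_add_div j _).symm⟩
  by_cases hq1 : q + 1 < 2 ^ n
  · rw [show q + 2 ^ n * t + 1 = q + 1 + 2 ^ n * t by ring, extendOrdering_add_two_pow_mul w hq,
      extendOrdering_add_two_pow_mul w hq1]
    exact hw.le_hammingDist_snoc_succ hq1 _
  · have ht : t = 0 := by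
      have : 2 ^ n * t < 2 ^ n * 1 := by rw [pow_succ] at hj; omega
      exact Nat.lt_one_iff.1 (Nat.lt_of_mul_lt_mul_left this)
    obtain rfl : q = 2 ^ n - 1 := by omega
    have hseam := extendOrdering_two_pow_add w hN
    rw [add_zero] at hseam
    rw [ht, mul_zero, add_zero, extendOrdering_of_lt w hq, Nat.sub_add_cancel hN, hseam,
      hw.apply_last, hw.apply_zero,
      hammingDist_snoc, hammingDist_eq_card_of_forall_ne fun _ => one_ne_zero, Fintype.card_fin]
    omega

theorem extend (hw : IsDispersedOrdering n w) :
    IsDispersedOrdering (n + 1) (extendOrdering n w) where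
  injOn := hw.injOn_extendOrdering
  le_hammingDist_succ _ := hw.le_hammingDist_extendOrdering_succ
  apply_zero := by
    rw [extendOrdering_of_lt w (Nat.two_pow_pos n), hw.apply_zero, extendBit_zero,
      Fin.snoc_const]
    simp
  apply_half_sub_one := by
    show extendOrdering n w (2 ^ n - 1) = fun i : Fin (n + 1) => if (i : ℕ) = n then 0 else 1
    rw [extendOrdering_of_lt w (by have := Nat.two_pow_pos n; omega), hw.apply_last,
      extendBit_two_pow_sub_one, Fin.snoc_const]
  apply_half := by
    show extendOrdering n w (2 ^ n + 0) = fun i : Fin (n + 1) => if (i : ℕ) = n then 1 else 0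
    rw [extendOrdering_two_pow_add w (Nat.two_pow_pos n), hw.apply_zero, extendBit_zero,
      zero_add, Fin.snoc_const]
  apply_last := by
    have hN := Nat.two_pow_pos n
    rw [show 2 ^ (n + 1) - 1 = 2 ^ n + (2 ^ n - 1) by rw [pow_succ]; omega,
      extendOrdering_two_pow_add w (by omega), hw.apply_last, extendBit_two_pow_sub_one,
      zero_add, Fin.snoc_const]
    simp

end IsDispersedOrdering

theorem isDispersedOrdering_dispersedOrdering (n : ℕ) :
    IsDispersedOrdering n (dispersedOrdering n) := by
  induction n with
  | zero => exact isDispersedOrdering_zero _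
  | succ n ih => exact ih.extend

theorem hypercube_dispersed_ordering (n : ℕ) (hn : 2 ≤ n) :
    ∃ v : Fin (2 ^ n) → (Fin n → ZMod 2),
      Function.Bijective v ∧
      (∀ (j : Fin (2 ^ n)) (h : (j : ℕ) + 1 < 2 ^ n),
        n - 1 ≤ hammingDist (v j) (v ⟨(j : ℕ) + 1, h⟩)) ∧
      v ⟨0, Nat.two_pow_pos n⟩ = (fun _ => (0 : ZMod 2)) ∧
      v ⟨2 ^ (n - 1) - 1, by
          have h1 : 0 < 2 ^ (n - 1) := Nat.two_pow_pos _
          have h : 2 ^ (n - 1) < 2 ^ n :=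
            Nat.pow_lt_pow_right (show (1:ℕ) < 2 by norm_num) (show n - 1 < n by omega)
          omega⟩ = (fun i : Fin n => if (i : ℕ) = n - 1 then (0 : ZMod 2) else 1) ∧
      v ⟨2 ^ (n - 1), by
          have h : 2 ^ (n - 1) < 2 ^ n :=
            Nat.pow_lt_pow_right (show (1:ℕ) < 2 by norm_num) (show n - 1 < n by omega)
          omega⟩ = (fun i : Fin n => if (i : ℕ) = n - 1 then (1 : ZMod 2) else 0) ∧
      v ⟨2 ^ n - 1, by have h := Nat.two_pow_pos n; omega⟩ = (fun _ => (1 : ZMod 2)) := by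
  have hw := isDispersedOrdering_dispersedOrdering n
  exact ⟨fun j => dispersedOrdering n j, hw.bijective, fun j => hw.le_hammingDist_succ j,
    hw.apply_zero, hw.apply_half_sub_one, hw.apply_half, hw.apply_last⟩
end

section
/- For the complete binary tree T_n of depth n, DL(T_n) = n. -/
/-- The complete binary tree of depth `n`: vertices are binary strings of length at most `n`
(the root is the empty string), with `x` adjacent to `y` iff one is obtained from the other
by deleting the last bit. -/
def completeBinaryTree (n : ℕ) : SimpleGraph {l : List Bool // l.length ≤ n} where
  Adj x y := (x.val = y.val.dropLast ∧ y.val ≠ []) ∨ (y.val = x.val.dropLast ∧ x.val ≠ [])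
  symm := by
    constructor
    intro x y h
    tauto
  loopless := by
    constructor
    intro x h
    rcases h with ⟨h1, h2⟩ | ⟨h1, h2⟩ <;>
    · have hlen := congrArg List.length h1
      rw [List.length_dropLast] at hlen
      have hpos : 0 < x.val.length := List.length_pos_iff.mpr h2
      omega

/-- `G` (with `N` vertices) admits a `k`-dispersed labelling: a bijection from
`{1, ..., N}` (as `Fin N`) to the vertices with consecutive labels at distance `≥ k`. -/
def HasDispersedLabellingN {V : Type*} (G : SimpleGraph V) (N k : ℕ) : Prop :=
  ∃ φ : Fin N ≃ V, ∀ i j : Fin N, (j : ℕ) = (i : ℕ) + 1 → k ≤ G.dist (φ i) (φ j)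

/-- `DL` of a graph with `N` vertices. -/
noncomputable def DLn {V : Type*} (G : SimpleGraph V) (N : ℕ) : ℕ :=
  sSup {k | HasDispersedLabellingN G N k}

/-!
Give each vertex its signed depth: `|x|` if `x` starts with `1`, `-|x|` if it starts with `0`,
and `0` at the root. It changes by at most one along an edge, so vertices whose signed depths
differ by `n` are at distance at least `n`. Up to `2ⁿ`, the paper's labelling alternates the
vertices of signed depth `≥ 0` other than the `1`-leaves with the `0`-leaves (signed depth `-n`);
after `2ⁿ` it alternates the `1`-leaves (signed depth `n`) with the remaining vertices of
negative signed depth. So consecutive labels are at distance `≥ n`. Conversely, every vertex is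
within distance `n` of the root, and in any labelling the root has a consecutive neighbour.
-/

namespace List

variable {α : Type*} {R : α → α → Prop}

theorem isChain_interleave (hR : ∀ x y, R x y → R y x) :
    ∀ {a b : List α}, b.length ≤ a.length → a.length ≤ b.length + 1 →
      (∀ x ∈ a, ∀ y ∈ b, R x y) → (a.interleave b).IsChain R
  | [], b, hlen, _, _ => by simp_all
  | x :: a, [], _, hlen, _ => by simp_all
  | x :: a, y :: b, hlen₁, hlen₂, hrel => by
    rw [cons_interleave, isChain_cons]
    refine ⟨by simpa using hrel x (by simp) y (by simp), ?_⟩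
    exact isChain_interleave hR (by simpa using hlen₂) (by simpa using hlen₁)
      fun u hu v hv => hR _ _ (hrel v (mem_of_mem_tail hv) u hu)
termination_by a b => a.length + b.length

theorem getLast?_interleave_of_length_eq {a b : List α} (h : a.length = b.length) :
    (a.interleave b).getLast? = b.getLast? := by
  obtain rfl | ⟨b, y, rfl⟩ := b.eq_nil_or_concat
  · simp_all
  · rw [← head?_reverse, reverse_interleave_of_length_eq_length h]
    simp

theorem head?_interleave_of_ne_nil {a : List α} (b : List α) (ha : a ≠ []) :
    (a.interleave b).head? = a.head? := by
  obtain ⟨x, a, rfl⟩ := exists_cons_of_ne_nil ha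
  simp

end List

theorem SimpleGraph.abs_sub_le_dist {V : Type*} {G : SimpleGraph V} {f : V → ℤ}
    (hf : ∀ u v, G.Adj u v → |f u - f v| ≤ 1) {u v : V} (huv : G.Reachable u v) :
    |f u - f v| ≤ G.dist u v := by
  obtain ⟨w, hw⟩ := huv.exists_walk_length_eq_dist
  rw [← hw]
  clear hw huv
  induction w with
  | nil => simp
  | cons hadj w ih =>
    rw [Walk.length_cons, Nat.cast_succ]
    exact (abs_sub_le _ (f _) _).trans (by linarith [hf _ _ hadj])

section DispersedLabelling

variable {V : Type*} {G : SimpleGraph V}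

theorem hasDispersedLabellingN_of_isChain {k : ℕ} {L : List V} (hnd : L.Nodup)
    (hmem : ∀ v, v ∈ L) (hL : L.IsChain fun u v => k ≤ G.dist u v) :
    HasDispersedLabellingN G L.length k := by
  classical
  refine ⟨hnd.getEquivOfForallMemList L hmem, fun i j hij => ?_⟩
  obtain ⟨j, hj⟩ := j
  subst hij
  exact hL.getElem i hj

theorem HasDispersedLabellingN.le_of_forall_dist_le {N k r : ℕ}
    (h : HasDispersedLabellingN G N k) (hN : 2 ≤ N) (c : V) (hc : ∀ v, G.dist c v ≤ r) :
    k ≤ r := by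
  obtain ⟨φ, hφ⟩ := h
  set i := φ.symm c
  have hφi : φ i = c := φ.apply_symm_apply c
  by_cases hnext : i.1 + 1 < N
  · have hsucc := hφ i ⟨i + 1, hnext⟩ rfl
    rw [hφi] at hsucc
    exact hsucc.trans (hc _)
  · have hprev := hφ ⟨i - 1, by omega⟩ i (by simp only; omega)
    rw [hφi, SimpleGraph.dist_comm] at hprev
    exact hprev.trans (hc _)

end DispersedLabelling

def signedDepth : List Bool → ℤ
  | [] => 0
  | true :: l => l.length + 1
  | false :: l => -(l.length + 1)

theorem abs_signedDepth_sub_dropLast_le (l : List Bool) :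
    |signedDepth l - signedDepth l.dropLast| ≤ 1 := by
  match l with
  | [] => simp
  | [b] => cases b <;> simp [signedDepth]
  | b :: c :: l =>
    rw [List.dropLast_cons_cons]
    cases b <;> simp [signedDepth]

def bitStrings : ℕ → List (List Bool)
  | 0 => [[]]
  | k + 1 => (bitStrings k).map (false :: ·) ++ (bitStrings k).map (true :: ·)

def shortBitStrings : ℕ → List (List Bool)
  | 0 => []
  | k + 1 => [] :: ((shortBitStrings k).map (false :: ·) ++ (shortBitStrings k).map (true :: ·))

theorem mem_bitStrings {k : ℕ} {l : List Bool} : l ∈ bitStrings k ↔ l.length = k := by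
  induction k generalizing l with
  | zero => simp [bitStrings]
  | succ k ih => rcases l with _ | ⟨_ | _, l⟩ <;> simp [bitStrings, ih]

theorem mem_shortBitStrings {k : ℕ} {l : List Bool} :
    l ∈ shortBitStrings k ↔ l.length < k := by
  induction k generalizing l with
  | zero => simp [shortBitStrings]
  | succ k ih => rcases l with _ | ⟨_ | _, l⟩ <;> simp [shortBitStrings, ih]

theorem nodup_bitStrings (k : ℕ) : (bitStrings k).Nodup := by
  induction k with
  | zero => simp [bitStrings]
  | succ k ih => simp [bitStrings, List.nodup_append, ih.map, List.cons_injective]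

theorem nodup_shortBitStrings (k : ℕ) : (shortBitStrings k).Nodup := by
  induction k with
  | zero => simp [shortBitStrings]
  | succ k ih => simp [shortBitStrings, List.nodup_append, ih.map, List.cons_injective]

theorem length_bitStrings (k : ℕ) : (bitStrings k).length = 2 ^ k := by
  induction k with
  | zero => rfl
  | succ k ih =>
    rw [bitStrings, List.length_append, List.length_map, List.length_map, ih, pow_succ, mul_two]

theorem length_shortBitStrings (k : ℕ) : (shortBitStrings k).length = 2 ^ k - 1 := by
  induction k with
  | zero => rfl
  | succ k ih =>
    simp only [shortBitStrings, List.length_cons, List.length_append, List.length_map, ih, pow_succ]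
    have := k.one_le_two_pow
    omega

namespace completeBinaryTree

def dispersedOrder (m : ℕ) : List (List Bool) :=
  ([] :: (shortBitStrings m).map (true :: ·)).interleave ((bitStrings m).map (false :: ·)) ++
    ((bitStrings m).map (true :: ·)).interleave ((shortBitStrings m).map (false :: ·))

theorem mem_dispersedOrder {m : ℕ} {l : List Bool} :
    l ∈ dispersedOrder m ↔ l.length ≤ m + 1 := by
  rcases l with _ | ⟨_ | _, l⟩ <;>
    simp [dispersedOrder, List.interleave_perm_append.mem_iff, mem_bitStrings,
      mem_shortBitStrings] <;> omega

theorem nodup_dispersedOrder (m : ℕ) : (dispersedOrder m).Nodup := by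
  simp only [dispersedOrder, List.nodup_append, List.interleave_perm_append.nodup_iff,
    List.interleave_perm_append.mem_iff]
  grind [mem_bitStrings, mem_shortBitStrings, List.Nodup.map, nodup_bitStrings,
    nodup_shortBitStrings, List.cons_injective]

theorem length_dispersedOrder (m : ℕ) : (dispersedOrder m).length = 2 ^ (m + 2) - 1 := by
  simp only [dispersedOrder, List.length_append, List.length_interleave, List.length_cons,
    List.length_map, length_bitStrings, length_shortBitStrings, pow_succ]
  have := m.one_le_two_pow
  omega

theorem isChain_dispersedOrder (m : ℕ) :
    (dispersedOrder m).IsChain fun x y => (m + 1 : ℤ) ≤ |signedDepth x - signedDepth y| := by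
  have far : ∀ x y, signedDepth y + (m + 1) ≤ signedDepth x →
      (m + 1 : ℤ) ≤ |signedDepth x - signedDepth y| :=
    fun x y h => le_abs.mpr (Or.inl (by linarith))
  have symm : ∀ x y, (m + 1 : ℤ) ≤ |signedDepth x - signedDepth y| →
      (m + 1 : ℤ) ≤ |signedDepth y - signedDepth x| := fun x y h => by rwa [abs_sub_comm]
  have hlen : (shortBitStrings m).length + 1 = (bitStrings m).length := by
    rw [length_shortBitStrings, length_bitStrings]
    have := m.one_le_two_pow
    omega
  refine .append (List.isChain_interleave symm ?_ ?_ ?_) (List.isChain_interleave symm ?_ ?_ ?_) ?_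
  · simp [hlen]
  · simp [hlen]
  · simp only [List.mem_cons, List.mem_map, mem_bitStrings]
    rintro x (rfl | ⟨a, -, rfl⟩) y ⟨b, hb, rfl⟩ <;> apply far <;>
      simp only [signedDepth] <;> omega
  · simp [← hlen]
  · simp [← hlen]
  · simp only [List.mem_map, mem_bitStrings, mem_shortBitStrings]
    rintro _ ⟨a, ha, rfl⟩ _ ⟨b, -, rfl⟩
    apply far
    simp [signedDepth, ha]
  · rw [List.getLast?_interleave_of_length_eq (by simp [hlen]),
      List.head?_interleave_of_ne_nil _ (by simp [← List.length_pos_iff, ← hlen])]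
    intro x hx y hy
    obtain ⟨a, ha, rfl⟩ := List.mem_map.mp (List.mem_of_getLast? hx)
    obtain ⟨b, hb, rfl⟩ := List.mem_map.mp (List.mem_of_head? hy)
    apply symm
    apply far
    simp only [signedDepth, mem_bitStrings.mp ha, mem_bitStrings.mp hb]
    omega

variable {n : ℕ}

theorem abs_signedDepth_sub_le_one_of_adj {u v : {l : List Bool // l.length ≤ n}}
    (h : (completeBinaryTree n).Adj u v) : |signedDepth u.1 - signedDepth v.1| ≤ 1 := by
  rcases h with ⟨h, -⟩ | ⟨h, -⟩
  · rw [h, abs_sub_comm]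
    exact abs_signedDepth_sub_dropLast_le v.1
  · rw [h]
    exact abs_signedDepth_sub_dropLast_le u.1

theorem exists_walk_root_length_eq (x : {l : List Bool // l.length ≤ n}) :
    ∃ w : (completeBinaryTree n).Walk x ⟨[], n.zero_le⟩, w.length = x.1.length := by
  obtain ⟨l, hl⟩ := x
  induction l using List.reverseRecOn with
  | nil => exact ⟨.nil, rfl⟩
  | append_singleton l b ih =>
    have hl' : l.length ≤ n := (by simpa using hl : l.length < n).le
    obtain ⟨w, hw⟩ := ih hl'
    have hadj : (completeBinaryTree n).Adj ⟨l ++ [b], hl⟩ ⟨l, hl'⟩ :=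
      Or.inr ⟨by simp, by simp⟩
    exact ⟨.cons hadj w, by simp [hw]⟩

theorem reachable (x y : {l : List Bool // l.length ≤ n}) :
    (completeBinaryTree n).Reachable x y := by
  obtain ⟨wx, -⟩ := exists_walk_root_length_eq x
  obtain ⟨wy, -⟩ := exists_walk_root_length_eq y
  exact wx.reachable.trans wy.reachable.symm

theorem dist_root_le (x : {l : List Bool // l.length ≤ n}) :
    (completeBinaryTree n).dist ⟨[], n.zero_le⟩ x ≤ n := by
  obtain ⟨w, hw⟩ := exists_walk_root_length_eq x
  rw [SimpleGraph.dist_comm]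
  exact (SimpleGraph.dist_le w).trans (hw ▸ x.2)

theorem hasDispersedLabellingN (m : ℕ) :
    HasDispersedLabellingN (completeBinaryTree (m + 1)) (2 ^ (m + 2) - 1) (m + 1) := by
  have hmem l (hl : l ∈ dispersedOrder m) : l.length ≤ m + 1 := mem_dispersedOrder.mp hl
  have hlen : ((dispersedOrder m).pmap Subtype.mk hmem).length = 2 ^ (m + 2) - 1 := by
    rw [List.length_pmap, length_dispersedOrder]
  rw [← hlen]
  refine hasDispersedLabellingN_of_isChain
    ((nodup_dispersedOrder m).pmap fun _ _ _ _ => congrArg Subtype.val)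
    (fun x => List.mem_pmap.mpr ⟨x.1, mem_dispersedOrder.mpr x.2, rfl⟩)
    (List.isChain_pmap_of_isChain (fun x y hx hy hxy => ?_) (isChain_dispersedOrder m) hmem)
  have := SimpleGraph.abs_sub_le_dist (f := fun v => signedDepth v.1)
    (fun _ _ => abs_signedDepth_sub_le_one_of_adj) (reachable ⟨x, hx⟩ ⟨y, hy⟩)
  exact_mod_cast hxy.trans this

end completeBinaryTree

theorem DL_completeBinaryTree (n : ℕ) (hn : 1 ≤ n) :
    DLn (completeBinaryTree n) (2 ^ (n + 1) - 1) = n := by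
  obtain ⟨m, rfl⟩ := Nat.exists_eq_add_of_le' hn
  refine IsGreatest.csSup_eq ⟨completeBinaryTree.hasDispersedLabellingN m,
    fun k (hk : HasDispersedLabellingN _ _ k) => ?_⟩
  refine hk.le_of_forall_dist_le ?_ _ completeBinaryTree.dist_root_le
  have := Nat.one_le_two_pow (n := m)
  rw [pow_succ, pow_succ]
  omega
end

section
/- Let G and H be finite connected graphs with |V(G)| = m and |V(H)| = n, where gcd(m,n) = 1. Then DL°(G □ H) ≥ DL°(G) + DL°(H), where G □ H is the Cartesian product. -/
/-- `G` admits a `k`-circular-dispersed labelling. -/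
def HasCircDispersedLabelling {V : Type*} [Fintype V] (G : SimpleGraph V) (k : ℕ) : Prop :=
  ∃ φ : ZMod (Fintype.card V) ≃ V,
    ∀ i : ZMod (Fintype.card V), k ≤ G.dist (φ i) (φ (i + 1))

/-- `DL° G`: the maximum `k` such that `G` admits a `k`-circular-dispersed labelling. -/
noncomputable def DLcirc {V : Type*} [Fintype V] (G : SimpleGraph V) : ℕ :=
  sSup {k | HasCircDispersedLabelling G k}

/-!
Run the two optimal circular labellings of `G` and `H` simultaneously: `i ↦ (φ i, ψ i)` for
`i ∈ ℤ/mnℤ`, which is a bijection onto `V × W` by the Chinese remainder theorem because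
`gcd(m, n) = 1`. Consecutive labels then differ by one step in each factor, and distances in
`G □ H` add up over the factors.
-/

open SimpleGraph

namespace SimpleGraph

variable {V W : Type*}

theorem dist_boxProd {G : SimpleGraph V} {H : SimpleGraph W} {x y : V × W}
    (hG : G.Reachable x.1 y.1) (hH : H.Reachable x.2 y.2) :
    (G □ H).dist x y = G.dist x.1 y.1 + H.dist x.2 y.2 := by
  have hGH : (G □ H).Reachable x y := reachable_boxProd.mpr ⟨hG, hH⟩
  apply Nat.cast_injective (R := ℕ∞)
  rw [Nat.cast_add, hGH.coe_dist_eq_edist, hG.coe_dist_eq_edist, hH.coe_dist_eq_edist,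
    edist_boxProd]

theorem dist_lt_card [Fintype V] (G : SimpleGraph V) (u v : V) :
    G.dist u v < Fintype.card V := by
  by_cases huv : G.Reachable u v
  · obtain ⟨p, hp, hlen⟩ := huv.exists_path_of_dist
    exact hlen ▸ hp.length_lt
  · have : Nonempty V := ⟨u⟩
    exact (dist_eq_zero_of_not_reachable huv).trans_lt Fintype.card_pos

end SimpleGraph

section CircDispersedLabelling

variable {V W : Type*} [Fintype V] [Fintype W]

theorem bddAbove_setOf_hasCircDispersedLabelling (G : SimpleGraph V) :
    BddAbove {k | HasCircDispersedLabelling G k} :=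
  ⟨Fintype.card V, fun _ ⟨_, hφ⟩ => ((hφ 0).trans_lt (G.dist_lt_card _ _)).le⟩

theorem le_DLcirc {G : SimpleGraph V} {k : ℕ} (h : HasCircDispersedLabelling G k) :
    k ≤ DLcirc G :=
  le_csSup (bddAbove_setOf_hasCircDispersedLabelling G) h

theorem hasCircDispersedLabelling_zero [Nonempty V] (G : SimpleGraph V) :
    HasCircDispersedLabelling G 0 :=
  have : NeZero (Fintype.card V) := ⟨Fintype.card_ne_zero⟩
  ⟨Fintype.equivOfCardEq (ZMod.card _), fun _ => Nat.zero_le _⟩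

theorem hasCircDispersedLabelling_DLcirc [Nonempty V] (G : SimpleGraph V) :
    HasCircDispersedLabelling G (DLcirc G) :=
  Nat.sSup_mem ⟨0, hasCircDispersedLabelling_zero G⟩
    (bddAbove_setOf_hasCircDispersedLabelling G)

theorem HasCircDispersedLabelling.boxProd {G : SimpleGraph V} {H : SimpleGraph W} {k l : ℕ}
    (hG : G.Preconnected) (hH : H.Preconnected)
    (hcop : (Fintype.card V).Coprime (Fintype.card W))
    (hk : HasCircDispersedLabelling G k) (hl : HasCircDispersedLabelling H l) :
    HasCircDispersedLabelling (G □ H) (k + l) := by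
  obtain ⟨φ, hφ⟩ := hk
  obtain ⟨ψ, hψ⟩ := hl
  let crt : ZMod (Fintype.card (V × W)) ≃+* ZMod (Fintype.card V) × ZMod (Fintype.card W) :=
    (ZMod.ringEquivCongr (Fintype.card_prod V W)).trans (ZMod.chineseRemainder hcop)
  refine ⟨crt.toEquiv.trans (φ.prodCongr ψ), fun i => ?_⟩
  have hsucc : crt (i + 1) = ((crt i).1 + 1, (crt i).2 + 1) := by
    rw [map_add, map_one]
    rfl
  change k + l ≤
    (G □ H).dist (φ (crt i).1, ψ (crt i).2) (φ (crt (i + 1)).1, ψ (crt (i + 1)).2)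
  rw [hsucc, dist_boxProd (hG _ _) (hH _ _)]
  exact add_le_add (hφ _) (hψ _)

end CircDispersedLabelling

theorem DLcirc_boxProd {V W : Type*} [Fintype V] [Fintype W]
    (G : SimpleGraph V) (H : SimpleGraph W) (hG : G.Connected) (hH : H.Connected)
    (hgcd : Nat.gcd (Fintype.card V) (Fintype.card W) = 1) :
    DLcirc G + DLcirc H ≤ DLcirc (SimpleGraph.boxProd G H) :=
  have := hG.nonempty
  have := hH.nonempty
  le_DLcirc <| (hasCircDispersedLabelling_DLcirc G).boxProd hG.preconnected hH.preconnected hgcd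
    (hasCircDispersedLabelling_DLcirc H)
end

section
/- For the path P_m with m edges: DL°(P_m) = m/2 if m ≥ 2 is even, and DL°(P_m) = (m−1)/2 if m ≥ 3 is odd. -/
/-!
Write `n = m + 1` for the number of vertices. Every vertex has two distinct cyclic neighbours in a
circular labelling, both at distance at least `k`; for the central vertex `m / 2` of the path only
one vertex lies farther than `m / 2`, so `k ≤ m / 2`. Conversely, alternating between the two
halves of the path, `0, s, 1, s + 1, 2, …` with `s = ⌈n / 2⌉`, moves by `s` or `s - 1 = m / 2`
at every step, including the step that closes the cycle. In ℕ, `m / 2` is exactly the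
right-hand side of the statement for either parity of `m`.
-/

namespace SimpleGraph

theorem pathGraph_natDist_le_length {n : ℕ} {u v : Fin n} (p : (pathGraph n).Walk u v) :
    Nat.dist u v ≤ p.length := by
  induction p with
  | nil => simp
  | @cons a b c hadj p ih =>
    have hab : Nat.dist a b = 1 := by
      rw [pathGraph_adj] at hadj
      simp only [Nat.dist]
      omega
    calc Nat.dist a c ≤ Nat.dist a b + Nat.dist b c := Nat.dist.triangle_inequality _ _ _
      _ ≤ (Walk.cons _ p).length := by rw [Walk.length_cons]; omega

theorem pathGraph_dist_le_of_add_eq {n : ℕ} (u : Fin n) :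
    ∀ (d : ℕ) (v : Fin n), u.val + d = v.val → (pathGraph n).dist u v ≤ d
  | 0, v, h => by simp [Fin.ext (by simpa using h)]
  | d + 1, v, h => by
    let w : Fin n := ⟨u + d, by omega⟩
    have hwv : (pathGraph n).Adj w v := pathGraph_adj.mpr (Or.inl (by simp only [w]; omega))
    calc (pathGraph n).dist u v ≤ (pathGraph n).dist u w + (pathGraph n).dist w v :=
          (pathGraph_preconnected n u w).dist_triangle_left v
      _ ≤ d + 1 := by
          rw [dist_eq_one_iff_adj.mpr hwv]
          exact Nat.add_le_add_right (pathGraph_dist_le_of_add_eq u d w rfl) 1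

theorem pathGraph_dist {n : ℕ} (u v : Fin n) : (pathGraph n).dist u v = Nat.dist u v := by
  refine le_antisymm ?_ ?_
  · rcases le_total u.val v.val with h | h
    · exact pathGraph_dist_le_of_add_eq u _ v (by simp only [Nat.dist]; omega)
    · rw [dist_comm, Nat.dist_comm]
      exact pathGraph_dist_le_of_add_eq v _ u (by simp only [Nat.dist]; omega)
  · obtain ⟨p, hp⟩ := (pathGraph_preconnected n u v).exists_walk_length_eq_dist
    exact hp ▸ pathGraph_natDist_le_length p

end SimpleGraph

open SimpleGraph

theorem HasCircDispersedLabelling.exists_ne_le_dist {V : Type*} [Fintype V] {G : SimpleGraph V}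
    {k : ℕ} (h : HasCircDispersedLabelling G k) (hV : 2 < Fintype.card V) (v : V) :
    ∃ w₁ w₂, w₁ ≠ w₂ ∧ k ≤ G.dist v w₁ ∧ k ≤ G.dist v w₂ := by
  obtain ⟨φ, hφ⟩ := h
  set i := φ.symm v
  have htwo : ((2 : ℕ) : ZMod (Fintype.card V)) ≠ 0 := by
    rw [Ne, ZMod.natCast_eq_zero_iff]
    exact fun hdvd => absurd (Nat.le_of_dvd two_pos hdvd) (by omega)
  have hne : i + 1 ≠ i - 1 := fun heq => htwo (by push_cast; linear_combination heq)
  refine ⟨φ (i + 1), φ (i - 1), φ.injective.ne hne, by simpa [i] using hφ i, ?_⟩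
  simpa [i, dist_comm] using hφ (i - 1)

def pathAlternatingTour (n i : ℕ) : ℕ :=
  if i % 2 = 0 then i / 2 else i / 2 + (n + 1) / 2

theorem hasCircDispersedLabelling_pathGraph (m : ℕ) :
    HasCircDispersedLabelling (pathGraph (m + 1)) (m / 2) := by
  let f : ZMod (m + 1) → Fin (m + 1) := fun i =>
    ⟨pathAlternatingTour (m + 1) i.val, by
      have := ZMod.val_lt i; unfold pathAlternatingTour; split_ifs <;> omega⟩
  have hf : Function.Injective f := fun i j hij => by
    have := ZMod.val_lt i; have := ZMod.val_lt j
    have hij := congrArg Fin.val hij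
    simp only [f, pathAlternatingTour] at hij
    apply ZMod.val_injective
    split_ifs at hij <;> omega
  unfold HasCircDispersedLabelling
  rw [Fintype.card_fin]
  refine ⟨.ofBijective f ((Fintype.bijective_iff_injective_and_card f).mpr ⟨hf, by simp⟩),
    fun i => ?_⟩
  have hi := ZMod.val_lt i
  have hsucc : (i + 1).val = if i.val + 1 < m + 1 then i.val + 1 else 0 := by
    rw [ZMod.val_add, ZMod.val_one_eq_one_mod, Nat.add_mod_mod]
    split_ifs with h
    · exact Nat.mod_eq_of_lt h
    · rw [show i.val + 1 = m + 1 by omega, Nat.mod_self]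
  simp only [Equiv.ofBijective_apply, pathGraph_dist, f, pathAlternatingTour, hsucc, Nat.dist]
  split_ifs <;> omega

theorem le_half_of_hasCircDispersedLabelling_pathGraph {m k : ℕ} (hm : 2 ≤ m)
    (h : HasCircDispersedLabelling (pathGraph (m + 1)) k) : k ≤ m / 2 := by
  obtain ⟨w₁, w₂, hne, h₁, h₂⟩ := h.exists_ne_le_dist (by rw [Fintype.card_fin]; omega) ⟨m / 2, by omega⟩
  have := Fin.val_injective.ne hne
  have := w₁.isLt; have := w₂.isLt
  simp only [pathGraph_dist, Nat.dist] at h₁ h₂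
  omega

theorem DLcirc_pathGraph (m : ℕ) (hm : 2 ≤ m) :
    DLcirc (SimpleGraph.pathGraph (m + 1)) =
      if Even m then m / 2 else (m - 1) / 2 := by
  have hmax : IsGreatest {k | HasCircDispersedLabelling (pathGraph (m + 1)) k} (m / 2) :=
    ⟨hasCircDispersedLabelling_pathGraph m,
      fun _ hk => le_half_of_hasCircDispersedLabelling_pathGraph hm hk⟩
  rw [DLcirc, hmax.csSup_eq]
  split_ifs with hev
  · rfl
  · rw [Nat.not_even_iff_odd] at hev
    obtain ⟨c, rfl⟩ := hev
    omega
end
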